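/- arXiv:2005.13277 — 4 statements merged into one kernel-verified Lean document; each statement's English description precedes it below -/
import Mathlib

section
/- Define on H²₀(Ω) the bilinear form ⟨φ,ψ⟩ = (1/2)∫_Ω μ((∂₂₂φ-∂₁₁φ)(∂₂₂ψ-∂₁₁ψ) + 4∂₁₂φ ∂₁₂ψ) dx, where μ is measurable with μ* ≤ μ ≤ μ^*. Then for all φ ∈ H²₀(Ω): (√μ*/√2)·‖Δφ‖_{L²(Ω)} ≤ ⟨φ,φ⟩^{1/2} ≤ (√μ^*/√2)·‖Δφ‖_{L²(Ω)}. -/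
open MeasureTheory

noncomputable def pd2 (f : ℝ × ℝ → ℝ) (v w x : ℝ × ℝ) : ℝ :=
  fderiv ℝ (fun y => fderiv ℝ f y w) x v

lemma contDiff_pdinner {f : ℝ × ℝ → ℝ} (hf : ContDiff ℝ (⊤ : ℕ∞) f) (w : ℝ × ℝ) :
    ContDiff ℝ (⊤ : ℕ∞) (fun y => fderiv ℝ f y w) :=
  (hf.fderiv_right (by simp)).clm_apply contDiff_const

lemma contDiff_pd2 {f : ℝ × ℝ → ℝ} (hf : ContDiff ℝ (⊤ : ℕ∞) f) (v w : ℝ × ℝ) :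
    ContDiff ℝ (⊤ : ℕ∞) (pd2 f v w) :=
  (((contDiff_pdinner hf w).fderiv_right (by simp)).clm_apply contDiff_const)

lemma pd2_eq {f : ℝ × ℝ → ℝ} (hf : ContDiff ℝ (⊤ : ℕ∞) f) (v w x : ℝ × ℝ) :
    pd2 f v w x = fderiv ℝ (fderiv ℝ f) x v w := by
  have h1 : DifferentiableAt ℝ (fderiv ℝ f) x :=
    ((hf.fderiv_right (m := (⊤ : ℕ∞)) (by simp)).differentiable (by simp)) x
  have := fderiv_clm_apply h1 (differentiableAt_const w)
  simp only [fderiv_fun_const, Pi.zero_apply] at this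
  simp [pd2, this]

lemma pd2_symm {f : ℝ × ℝ → ℝ} (hf : ContDiff ℝ (⊤ : ℕ∞) f) (v w : ℝ × ℝ) :
    pd2 f v w = pd2 f w v := by
  funext x
  rw [pd2_eq hf, pd2_eq hf]
  exact second_derivative_symmetric (f' := fderiv ℝ f)
    (fun y => (hf.differentiable (by simp) y).hasFDerivAt)
    (((hf.fderiv_right (m := (⊤ : ℕ∞)) (by simp)).differentiable (by simp) x).hasFDerivAt) v w

lemma integral_div_eq_zero (g h : ℝ × ℝ → ℝ) (hg : ContDiff ℝ (⊤ : ℕ∞) g) (hh : ContDiff ℝ (⊤ : ℕ∞) h)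
    (hgc : HasCompactSupport g) (hhc : HasCompactSupport h) :
    ∫ x, (fderiv ℝ g x (1, 0) + fderiv ℝ h x (0, 1)) = 0 := by
  obtain ⟨R, hR0, hRK⟩ := ((hgc.union hhc).isBounded).subset_ball_lt 0 0
  set a : ℝ × ℝ := (-R, -R)
  set b : ℝ × ℝ := (R, R)
  have hab : a ≤ b := ⟨by simp [a, b]; linarith, by simp [a, b]; linarith⟩
  have hKsub : tsupport g ∪ tsupport h ⊆ Set.Ioo (-R) R ×ˢ Set.Ioo (-R) R := by
    intro x hx
    have := hRK hx
    rw [Metric.mem_ball] at this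
    constructor
    · rw [Set.mem_Ioo]
      have h1 : |x.1| < R := lt_of_le_of_lt (by
        calc |x.1| = ‖x.1‖ := rfl
        _ ≤ ‖x‖ := norm_fst_le x) (by simpa using this)
      exact abs_lt.1 h1
    · rw [Set.mem_Ioo]
      have h1 : |x.2| < R := lt_of_le_of_lt (by
        calc |x.2| = ‖x.2‖ := rfl
        _ ≤ ‖x‖ := norm_snd_le x) (by simpa using this)
      exact abs_lt.1 h1
  have hcont : Continuous fun x => fderiv ℝ g x (1, 0) + fderiv ℝ h x (0, 1) :=
    ((hg.fderiv_right (m := (⊤ : ℕ∞)) (by simp)).continuous.clm_apply continuous_const).add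
      ((hh.fderiv_right (m := (⊤ : ℕ∞)) (by simp)).continuous.clm_apply continuous_const)
  have key := integral_divergence_prod_Icc_of_hasFDerivAt_off_countable_of_le g h
    (fun x => fderiv ℝ g x) (fun x => fderiv ℝ h x) a b hab ∅ Set.countable_empty
    (hg.continuous.continuousOn) (hh.continuous.continuousOn)
    (fun x _ => (hg.differentiable (by simp) x).hasFDerivAt)
    (fun x _ => (hh.differentiable (by simp) x).hasFDerivAt)
    (hcont.continuousOn.integrableOn_compact isCompact_Icc)
  -- boundary terms vanish
  have hzg : ∀ x : ℝ × ℝ, x ∉ Set.Ioo (-R) R ×ˢ Set.Ioo (-R) R → g x = 0 := fun x hx =>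
    image_eq_zero_of_notMem_tsupport (fun hm => hx (hKsub (Set.mem_union_left _ hm)))
  have hzh : ∀ x : ℝ × ℝ, x ∉ Set.Ioo (-R) R ×ˢ Set.Ioo (-R) R → h x = 0 := fun x hx =>
    image_eq_zero_of_notMem_tsupport (fun hm => hx (hKsub (Set.mem_union_right _ hm)))
  have hIoo_Icc : Set.Ioo (-R) R ×ˢ Set.Ioo (-R) R ⊆ Set.Icc a b := by
    rw [Set.Icc_prod_eq]
    exact Set.prod_mono Set.Ioo_subset_Icc_self Set.Ioo_subset_Icc_self
  have e1 : (∫ x in a.1..b.1, h (x, b.2)) = 0 := by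
    rw [intervalIntegral.integral_congr (g := fun _ => (0:ℝ))
      (fun x _ => hzh _ (by simp [b, Set.mem_prod]))]
    simp
  have e2 : (∫ x in a.1..b.1, h (x, a.2)) = 0 := by
    rw [intervalIntegral.integral_congr (g := fun _ => (0:ℝ))
      (fun x _ => hzh _ (by simp [a, Set.mem_prod]))]
    simp
  have e3 : (∫ y in a.2..b.2, g (b.1, y)) = 0 := by
    rw [intervalIntegral.integral_congr (g := fun _ => (0:ℝ))
      (fun x _ => hzg _ (by simp [b, Set.mem_prod]))]
    simp
  have e4 : (∫ y in a.2..b.2, g (a.1, y)) = 0 := by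
    rw [intervalIntegral.integral_congr (g := fun _ => (0:ℝ))
      (fun x _ => hzg _ (by simp [a, Set.mem_prod]))]
    simp
  rw [e1, e2, e3, e4] at key
  simp only [sub_zero, add_zero, zero_sub, zero_add, sub_self] at key
  have hzero : ∀ x : ℝ × ℝ, x ∉ Set.Icc a b →
      fderiv ℝ g x (1, 0) + fderiv ℝ h x (0, 1) = 0 := by
    intro x hx
    have hg0 : fderiv ℝ g x = 0 := by
      by_contra hne
      exact hx (hIoo_Icc (hKsub (Set.mem_union_left _
        (support_fderiv_subset ℝ (by exact hne)))))
    have hh0 : fderiv ℝ h x = 0 := by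
      by_contra hne
      exact hx (hIoo_Icc (hKsub (Set.mem_union_right _
        (support_fderiv_subset ℝ (by exact hne)))))
    simp [hg0, hh0]
  rw [← MeasureTheory.setIntegral_eq_integral_of_forall_compl_eq_zero hzero]
  exact key

lemma hcs_pdinner {f : ℝ × ℝ → ℝ} (hf : HasCompactSupport f) (w : ℝ × ℝ) :
    HasCompactSupport (fun y => fderiv ℝ f y w) :=
  (hf.fderiv ℝ).comp_left (g := fun L : ℝ × ℝ →L[ℝ] ℝ => L w) rfl

lemma hcs_pd2 {f : ℝ × ℝ → ℝ} (hf : HasCompactSupport f) (v w : ℝ × ℝ) :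
    HasCompactSupport (pd2 f v w) :=
  ((hcs_pdinner hf w).fderiv ℝ).comp_left (g := fun L : ℝ × ℝ →L[ℝ] ℝ => L v) rfl
set_option maxHeartbeats 1000000

lemma key_identity {φ : ℝ × ℝ → ℝ} (hφ : ContDiff ℝ (⊤ : ℕ∞) φ) (hsupp : HasCompactSupport φ) :
    ∫ x, (pd2 φ (1, 0) (0, 1) x) ^ 2 = ∫ x, pd2 φ (1, 0) (1, 0) x * pd2 φ (0, 1) (0, 1) x := by
  set A := pd2 φ (1, 0) (0, 1) with hAdef
  set C := pd2 φ (1, 0) (1, 0) with hCdef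
  set D := pd2 φ (0, 1) (0, 1) with hDdef
  set B := fun y => fderiv ℝ φ y (0, 1) with hBdef
  set φ₁ := fun y => fderiv ℝ φ y (1, 0) with hφ₁def
  have hφ₁ : ContDiff ℝ (⊤ : ℕ∞) φ₁ := contDiff_pdinner hφ (1, 0)
  have hA : ContDiff ℝ (⊤ : ℕ∞) A := contDiff_pd2 hφ (1, 0) (0, 1)
  have hC : ContDiff ℝ (⊤ : ℕ∞) C := contDiff_pd2 hφ (1, 0) (1, 0)
  have hD : ContDiff ℝ (⊤ : ℕ∞) D := contDiff_pd2 hφ (0, 1) (0, 1)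
  have hB : ContDiff ℝ (⊤ : ℕ∞) B := contDiff_pdinner hφ (0, 1)
  have hAc : HasCompactSupport A := hcs_pd2 hsupp (1, 0) (0, 1)
  have hCc : HasCompactSupport C := hcs_pd2 hsupp (1, 0) (1, 0)
  have hDc : HasCompactSupport D := hcs_pd2 hsupp (0, 1) (0, 1)
  have hBc : HasCompactSupport B := hcs_pdinner hsupp (0, 1)
  have hg : ContDiff ℝ (⊤ : ℕ∞) (fun x => A x * B x) := hA.mul hB
  have hh : ContDiff ℝ (⊤ : ℕ∞) (fun x => -(C x * B x)) := (hC.mul hB).neg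
  have hgc : HasCompactSupport (fun x => A x * B x) := hBc.mul_left
  have hhc : HasCompactSupport (fun x => -(C x * B x)) := (hBc.mul_left (f := C)).comp_left (g := fun r : ℝ => -r) neg_zero
  have hdiv := integral_div_eq_zero _ _ hg hh hgc hhc
  -- pointwise computation of the divergence
  have hpt : ∀ x, fderiv ℝ (fun x => A x * B x) x (1, 0)
      + fderiv ℝ (fun x => -(C x * B x)) x (0, 1) = A x ^ 2 - C x * D x := by
    intro x
    have hdA : DifferentiableAt ℝ A x := (hA.differentiable (by simp)) x
    have hdB : DifferentiableAt ℝ B x := (hB.differentiable (by simp)) x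
    have hdC : DifferentiableAt ℝ C x := (hC.differentiable (by simp)) x
    have h1 : fderiv ℝ (fun x => A x * B x) x = A x • fderiv ℝ B x + B x • fderiv ℝ A x :=
      fderiv_mul hdA hdB
    have h2 : fderiv ℝ (fun x => -(C x * B x)) x = -(C x • fderiv ℝ B x + B x • fderiv ℝ C x) := by
      rw [fderiv_fun_neg, fderiv_fun_mul hdC hdB]
    -- identify directional derivatives
    have hB10 : fderiv ℝ B x (1, 0) = A x := rfl
    have hB01 : fderiv ℝ B x (0, 1) = D x := rfl
    have hAsymm : A = pd2 φ (0, 1) (1, 0) := pd2_symm hφ (1, 0) (0, 1)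
    have hA10 : fderiv ℝ A x (1, 0) = pd2 φ₁ (1, 0) (0, 1) x := by
      rw [hAsymm]; rfl
    have hC01 : fderiv ℝ C x (0, 1) = pd2 φ₁ (1, 0) (0, 1) x := by
      have : fderiv ℝ C x (0, 1) = pd2 φ₁ (0, 1) (1, 0) x := rfl
      rw [this, pd2_symm hφ₁ (0, 1) (1, 0)]
    rw [h1, h2]
    simp only [ContinuousLinearMap.add_apply, ContinuousLinearMap.coe_smul',
      Pi.smul_apply, ContinuousLinearMap.neg_apply, smul_eq_mul]
    rw [hB10, hB01, hA10, hC01]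
    ring
  rw [show (fun x => fderiv ℝ (fun x => A x * B x) x (1, 0)
      + fderiv ℝ (fun x => -(C x * B x)) x (0, 1)) = fun x => A x ^ 2 - C x * D x
      from funext hpt] at hdiv
  have hiA : Integrable (fun x => A x ^ 2) volume := by
    have := (hA.continuous.mul hA.continuous).integrable_of_hasCompactSupport (μ := volume) (hAc.mul_left (f := A))
    simpa [sq, Pi.mul_def] using this
  have hiCD : Integrable (fun x => C x * D x) volume :=
    (hC.continuous.mul hD.continuous).integrable_of_hasCompactSupport (μ := volume) (hDc.mul_left (f := C))
  rw [integral_sub hiA hiCD] at hdiv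
  linarith

lemma pd2_support_subset (f : ℝ × ℝ → ℝ) (v w : ℝ × ℝ) :
    Function.support (pd2 f v w) ⊆ tsupport f := by
  intro x hx
  have h1 : Function.support (fun y => fderiv ℝ f y w) ⊆ tsupport f := by
    intro y hy
    apply support_fderiv_subset ℝ
    simp only [Function.mem_support] at hy ⊢
    intro h0
    exact hy (by rw [h0]; rfl)
  have h2 : tsupport (fun y => fderiv ℝ f y w) ⊆ tsupport f :=
    closure_minimal h1 (isClosed_tsupport f)
  apply h2
  apply support_fderiv_subset ℝ
  simp only [Function.mem_support] at hx ⊢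
  intro h0
  exact hx (by rw [pd2, h0]; rfl)


/-- Equivalence of the energy norm `⟨φ,φ⟩^{1/2}` of the variable-coefficient form
with `‖Δφ‖_{L²}` on `H²₀(Ω)` (stated for smooth compactly supported `φ`):
`(√μ*/√2)‖Δφ‖ ≤ ⟨φ,φ⟩^{1/2} ≤ (√μ^*/√2)‖Δφ‖`. -/
theorem stmt2 (Ω : Set (ℝ × ℝ)) (hΩopen : IsOpen Ω) (hΩbdd : Bornology.IsBounded Ω)
    (μ : ℝ × ℝ → ℝ) (μs μS : ℝ) (hμs : 0 < μs) (hle : μs ≤ μS)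
    (hμmeas : Measurable μ) (hlow : ∀ x, μs ≤ μ x) (hup : ∀ x, μ x ≤ μS)
    (φ : ℝ × ℝ → ℝ) (hφ : ContDiff ℝ (⊤ : ℕ∞) φ) (hsupp : HasCompactSupport φ)
    (hsub : tsupport φ ⊆ Ω) :
    Real.sqrt μs / Real.sqrt 2 *
        Real.sqrt (∫ x in Ω, (pd2 φ (1, 0) (1, 0) x + pd2 φ (0, 1) (0, 1) x) ^ 2 ∂volume)
      ≤ Real.sqrt ((1 / 2) * ∫ x in Ω,
          μ x * ((pd2 φ (0, 1) (0, 1) x - pd2 φ (1, 0) (1, 0) x) ^ 2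
            + 4 * (pd2 φ (1, 0) (0, 1) x) ^ 2) ∂volume) ∧
    Real.sqrt ((1 / 2) * ∫ x in Ω,
          μ x * ((pd2 φ (0, 1) (0, 1) x - pd2 φ (1, 0) (1, 0) x) ^ 2
            + 4 * (pd2 φ (1, 0) (0, 1) x) ^ 2) ∂volume)
      ≤ Real.sqrt μS / Real.sqrt 2 *
        Real.sqrt (∫ x in Ω, (pd2 φ (1, 0) (1, 0) x + pd2 φ (0, 1) (0, 1) x) ^ 2 ∂volume) := by
  have hΩm : MeasurableSet Ω := hΩopen.measurableSet
  set A := pd2 φ (1, 0) (0, 1) with hAdef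
  set C := pd2 φ (1, 0) (1, 0) with hCdef
  set D := pd2 φ (0, 1) (0, 1) with hDdef
  have hAt : Continuous A := (contDiff_pd2 hφ (1, 0) (0, 1)).continuous
  have hCt : Continuous C := (contDiff_pd2 hφ (1, 0) (1, 0)).continuous
  have hDt : Continuous D := (contDiff_pd2 hφ (0, 1) (0, 1)).continuous
  have hAsup : Function.support A ⊆ tsupport φ := pd2_support_subset φ _ _
  have hCsup : Function.support C ⊆ tsupport φ := pd2_support_subset φ _ _
  have hDsup : Function.support D ⊆ tsupport φ := pd2_support_subset φ _ _
  have hA0 : ∀ x ∉ tsupport φ, A x = 0 := by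
    intro x hx; by_contra h; exact hx (hAsup h)
  have hC0 : ∀ x ∉ tsupport φ, C x = 0 := by
    intro x hx; by_contra h; exact hx (hCsup h)
  have hD0 : ∀ x ∉ tsupport φ, D x = 0 := by
    intro x hx; by_contra h; exact hx (hDsup h)
  set Q : ℝ × ℝ → ℝ := fun x => (D x - C x) ^ 2 + 4 * A x ^ 2 with hQdef
  set L : ℝ × ℝ → ℝ := fun x => (C x + D x) ^ 2 with hLdef
  have hQnn : ∀ x, 0 ≤ Q x := fun x => by simp only [hQdef]; positivity
  have hQ0 : ∀ x ∉ Ω, Q x = 0 := by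
    intro x hx
    have hxn : x ∉ tsupport φ := fun h => hx (hsub h)
    simp [hQdef, hA0 x hxn, hC0 x hxn, hD0 x hxn]
  have hL0 : ∀ x ∉ Ω, L x = 0 := by
    intro x hx
    have hxn : x ∉ tsupport φ := fun h => hx (hsub h)
    simp [hLdef, hC0 x hxn, hD0 x hxn]
  have hQcs : HasCompactSupport Q := by
    apply hsupp.mono'
    intro x hx
    by_contra hxn
    exact hx (by simp [hQdef, hA0 x hxn, hC0 x hxn, hD0 x hxn])
  have hLcs : HasCompactSupport L := by
    apply hsupp.mono'
    intro x hx
    by_contra hxn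
    exact hx (by simp [hLdef, hC0 x hxn, hD0 x hxn])
  have hQt : Continuous Q := by
    rw [hQdef]; fun_prop
  have hLt : Continuous L := by
    rw [hLdef]; fun_prop
  have hQint : Integrable Q volume := hQt.integrable_of_hasCompactSupport hQcs
  have hLint : Integrable L volume := hLt.integrable_of_hasCompactSupport hLcs
  -- ∫_Ω Q = ∫_Ω L
  have hA2int : Integrable (fun x => A x ^ 2) volume := by
    have := (hAt.mul hAt).integrable_of_hasCompactSupport (μ := volume)
      ((hcs_pd2 hsupp (1, 0) (0, 1)).mul_left (f := A))
    simpa [sq, Pi.mul_def] using this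
  have hCDint : Integrable (fun x => C x * D x) volume :=
    (hCt.mul hDt).integrable_of_hasCompactSupport (μ := volume)
      ((hcs_pd2 hsupp (0, 1) (0, 1)).mul_left (f := C))
  have hEq : ∫ x in Ω, Q x = ∫ x in Ω, L x := by
    rw [setIntegral_eq_integral_of_forall_compl_eq_zero hQ0,
      setIntegral_eq_integral_of_forall_compl_eq_zero hL0]
    have hptw : ∫ x, Q x = ∫ x, (L x + (4 * A x ^ 2 - 4 * (C x * D x))) := by
      apply integral_congr_ae
      filter_upwards with x
      simp only [hQdef, hLdef]; ring
    have hi1 : Integrable (fun x => 4 * A x ^ 2) volume := hA2int.const_mul 4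
    have hi2 : Integrable (fun x => 4 * (C x * D x)) volume := hCDint.const_mul 4
    have hi3 : Integrable (fun x => 4 * A x ^ 2 - 4 * (C x * D x)) volume := hi1.sub hi2
    rw [hptw, integral_add hLint hi3, integral_sub hi1 hi2,
      integral_const_mul, integral_const_mul, key_identity hφ hsupp]
    ring
  -- integrability of μ * Q on Ω
  have hμQint : IntegrableOn (fun x => μ x * Q x) Ω volume := by
    apply Integrable.mono' ((hQint.restrict (s := Ω)).const_mul μS)
    · exact ((hμmeas.aemeasurable.mul hQt.measurable.aemeasurable).aestronglyMeasurable)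
    · refine Filter.Eventually.of_forall fun x => ?_
      rw [Real.norm_eq_abs, abs_of_nonneg (mul_nonneg (hμs.le.trans (hlow x)) (hQnn x))]
      exact mul_le_mul_of_nonneg_right (hup x) (hQnn x)
  have hμsQint : IntegrableOn (fun x => μs * Q x) Ω volume := (hQint.restrict).const_mul μs
  have hlowI : μs * ∫ x in Ω, Q x ≤ ∫ x in Ω, μ x * Q x := by
    rw [← integral_const_mul]
    exact setIntegral_mono hμsQint hμQint
      (fun x => mul_le_mul_of_nonneg_right (hlow x) (hQnn x))
  have hupI : ∫ x in Ω, μ x * Q x ≤ μS * ∫ x in Ω, Q x := by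
    rw [← integral_const_mul]
    exact setIntegral_mono hμQint ((hQint.restrict).const_mul μS)
      (fun x => mul_le_mul_of_nonneg_right (hup x) (hQnn x))
  have hJnn : (0:ℝ) ≤ ∫ x in Ω, L x :=
    setIntegral_nonneg hΩm (fun x _ => by simp only [hLdef]; positivity)
  constructor
  · show Real.sqrt μs / Real.sqrt 2 * Real.sqrt (∫ x in Ω, L x)
      ≤ Real.sqrt ((1 / 2) * ∫ x in Ω, μ x * Q x)
    rw [show Real.sqrt μs / Real.sqrt 2 * Real.sqrt (∫ x in Ω, L x)
        = Real.sqrt (μs / 2 * ∫ x in Ω, L x) by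
      rw [Real.sqrt_mul (by positivity), Real.sqrt_div hμs.le]]
    apply Real.sqrt_le_sqrt
    rw [← hEq]
    linarith [hlowI]
  · show Real.sqrt ((1 / 2) * ∫ x in Ω, μ x * Q x)
      ≤ Real.sqrt μS / Real.sqrt 2 * Real.sqrt (∫ x in Ω, L x)
    rw [show Real.sqrt μS / Real.sqrt 2 * Real.sqrt (∫ x in Ω, L x)
        = Real.sqrt (μS / 2 * ∫ x in Ω, L x) by
      rw [Real.sqrt_mul (div_nonneg (hμs.trans_le hle).le (by norm_num)), Real.sqrt_div (hμs.trans_le hle).le]]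
    apply Real.sqrt_le_sqrt
    rw [← hEq]
    linarith [hupI]
end

section
/- Consider the Couette boundary value problem on ℝ×[−1,1] with μ = 2𝟙_{x₂>0} + 𝟙_{x₂≤0}: the piecewise solution u₁ satisfies u₁(1) = a₊ and u₁(−1) = a₋ if and only if C = 4(a₋ − a₊) + 6C₁ and C₂ = 2a₊ − a₋ − 2C₁. In particular, for each C₁ ∈ ℝ there is exactly one such solution, so the boundary value problem has uncountably many solutions. -/
/-- The piecewise Couette profile. -/
noncomputable def couette (C C₁ C₂ : ℝ) (t : ℝ) : ℝ :=
  if 0 < t then C / 4 * t ^ 2 + C₁ / 2 * t + C₂ else C / 2 * t ^ 2 + C₁ * t + C₂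

namespace couette

variable (C C₁ C₂ : ℝ)

theorem apply_one : couette C C₁ C₂ 1 = C / 4 + C₁ / 2 + C₂ := by
  norm_num [couette]

theorem apply_neg_one : couette C C₁ C₂ (-1) = C / 2 - C₁ + C₂ := by
  norm_num [couette]
  ring

theorem apply_zero : couette C C₁ C₂ 0 = C₂ := by
  simp [couette]

theorem boundary_values_iff (ap am : ℝ) :
    (couette C C₁ C₂ 1 = ap ∧ couette C C₁ C₂ (-1) = am) ↔
      (C = 4 * (am - ap) + 6 * C₁ ∧ C₂ = 2 * ap - am - 2 * C₁) := by
  rw [apply_one, apply_neg_one]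
  constructor
  · rintro ⟨hap, ham⟩
    constructor <;> linarith
  · rintro ⟨hC, hC₂⟩
    constructor <;> linarith

end couette

/-- Couette boundary value problem on `ℝ×[-1,1]` with `μ = 2𝟙_{x₂>0} + 𝟙_{x₂≤0}`:
the profile satisfies `u₁(1) = a₊`, `u₁(-1) = a₋` iff `C = 4(a₋-a₊)+6C₁` and
`C₂ = 2a₊-a₋-2C₁`; in particular the solutions are injectively parametrized by
`C₁ ∈ ℝ`, so there are uncountably many of them. -/
theorem stmt10 (ap am : ℝ) :
    (∀ C C₁ C₂ : ℝ,
      (couette C C₁ C₂ 1 = ap ∧ couette C C₁ C₂ (-1) = am) ↔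
      (C = 4 * (am - ap) + 6 * C₁ ∧ C₂ = 2 * ap - am - 2 * C₁)) ∧
    Function.Injective (fun C₁ : ℝ =>
      couette (4 * (am - ap) + 6 * C₁) C₁ (2 * ap - am - 2 * C₁)) := by
  refine ⟨fun C C₁ C₂ => couette.boundary_values_iff C C₁ C₂ ap am, fun x y hxy => ?_⟩
  -- the value at `t = 0` is `C₂ = 2a₊ - a₋ - 2C₁`, already injective in `C₁`
  have h₀ := congrFun hxy 0
  simp only [couette.apply_zero] at h₀
  linarith
end

section
/- For u = rg(r)e_θ with g ∈ C² and μ = μ(r) ∈ C¹ on ℝ²∖{0}, the viscous term satisfies div(μ Su) = r^{-2} ∂_r(r³ μ ∂_r g) e_θ, where Su = ∇u + (∇u)^T. -/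
noncomputable def pd (f : ℝ × ℝ → ℝ) (v x : ℝ × ℝ) : ℝ := fderiv ℝ f x v

noncomputable def rad (x : ℝ × ℝ) : ℝ := Real.sqrt (x.1 ^ 2 + x.2 ^ 2)

/-!
Away from the origin, `u = g(r) (x₂, -x₁)` has strain `Su = (g'(r)/r) P` with
`P = [[2x₁x₂, x₂² - x₁²], [x₂² - x₁², -2x₁x₂]]`, so `μ Su = H(r) P` with `H = μ g' / r`.
The row divergence of `H(r) P` is `H'(r) (P x) / r + H(r) div P`, and `P x = r² (x₂, -x₁)`,
`div P = 4 (x₂, -x₁)`. Hence `div (μ Su) = (r H' + 4 H) (x₂, -x₁) = r⁻³ (r⁴ H)' (x₂, -x₁)`,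
and `r⁴ H = r³ μ g'`.
-/

open ContinuousLinearMap

lemma rad_pos {x : ℝ × ℝ} (hx : x ≠ 0) : 0 < rad x := by
  have : x.1 ≠ 0 ∨ x.2 ≠ 0 := by
    contrapose! hx
    exact Prod.ext hx.1 hx.2
  refine Real.sqrt_pos.mpr ?_
  rcases this with h | h <;> positivity

lemma rad_sq (x : ℝ × ℝ) : rad x ^ 2 = x.1 ^ 2 + x.2 ^ 2 := Real.sq_sqrt (by positivity)

lemma hasFDerivAt_rad {x : ℝ × ℝ} (hx : x ≠ 0) :
    HasFDerivAt rad ((rad x)⁻¹ • (x.1 • fst ℝ ℝ ℝ + x.2 • snd ℝ ℝ ℝ)) x := by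
  have hsq := (hasFDerivAt_fst (𝕜 := ℝ) (p := x) (F := ℝ)).pow 2 |>.add (hasFDerivAt_snd.pow 2)
  refine (hsq.sqrt (Real.sqrt_pos.mp (rad_pos hx)).ne').congr_fderiv ?_
  ext <;> simp [rad] <;> field_simp

lemma pd_radial_mul {f : ℝ → ℝ} {P : ℝ × ℝ → ℝ} {L : ℝ × ℝ →L[ℝ] ℝ} {x : ℝ × ℝ}
    (hx : x ≠ 0) (hf : DifferentiableAt ℝ f (rad x)) (hP : HasFDerivAt P L x) (v : ℝ × ℝ) :
    pd (fun z => f (rad z) * P z) v x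
      = deriv f (rad x) * ((x.1 * v.1 + x.2 * v.2) / rad x) * P x + f (rad x) * L v := by
  have h : HasFDerivAt (fun z => f (rad z) * P z) _ x :=
    (hf.hasDerivAt.comp_hasFDerivAt x (hasFDerivAt_rad hx)).mul hP
  rw [pd, h.fderiv]
  simp only [add_apply, smul_apply, coe_fst', coe_snd', smul_eq_mul, Function.comp_apply]
  ring

lemma pd_congr_of_ne_zero {f f' : ℝ × ℝ → ℝ} (h : ∀ z, z ≠ 0 → f z = f' z) {x : ℝ × ℝ}
    (hx : x ≠ 0) (v : ℝ × ℝ) : pd f v x = pd f' v x := by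
  rw [pd, pd, Filter.EventuallyEq.fderiv_eq ((eventually_ne_nhds hx).mono h)]

noncomputable def swirl (g : ℝ → ℝ) (x : ℝ × ℝ) : ℝ × ℝ := g (rad x) • (x.2, -x.1)

noncomputable def stressProfile (μ g : ℝ → ℝ) (s : ℝ) : ℝ := μ s * deriv g s / s

section Swirl

variable {g : ℝ → ℝ}

lemma pd_swirl_fst {z : ℝ × ℝ} (hz : z ≠ 0) (hg : DifferentiableAt ℝ g (rad z)) (v : ℝ × ℝ) :
    pd (fun y => (swirl g y).1) v z
      = deriv g (rad z) * ((z.1 * v.1 + z.2 * v.2) / rad z) * z.2 + g (rad z) * v.2 :=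
  pd_radial_mul hz hg hasFDerivAt_snd v

lemma pd_swirl_snd {z : ℝ × ℝ} (hz : z ≠ 0) (hg : DifferentiableAt ℝ g (rad z)) (v : ℝ × ℝ) :
    pd (fun y => (swirl g y).2) v z
      = deriv g (rad z) * ((z.1 * v.1 + z.2 * v.2) / rad z) * -z.1 - g (rad z) * v.1 := by
  rw [sub_eq_add_neg, ← mul_neg]
  exact pd_radial_mul hz hg hasFDerivAt_fst.neg v

variable (μ : ℝ → ℝ) {S : ℝ × ℝ → ℝ}

lemma stress₁₁_swirl (hg : Differentiable ℝ g)
    (hS : ∀ x, S x = 2 * pd (fun y => (swirl g y).1) (1, 0) x) (z : ℝ × ℝ) (hz : z ≠ 0) :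
    μ (rad z) * S z = stressProfile μ g (rad z) * (2 * (z.1 * z.2)) := by
  rw [hS, pd_swirl_fst hz (hg _), stressProfile]
  ring

lemma stress₁₂_swirl (hg : Differentiable ℝ g)
    (hS : ∀ x, S x = pd (fun y => (swirl g y).1) (0, 1) x + pd (fun y => (swirl g y).2) (1, 0) x)
    (z : ℝ × ℝ) (hz : z ≠ 0) :
    μ (rad z) * S z = stressProfile μ g (rad z) * (z.2 * z.2 - z.1 * z.1) := by
  rw [hS, pd_swirl_fst hz (hg _), pd_swirl_snd hz (hg _), stressProfile]
  ring

lemma stress₂₂_swirl (hg : Differentiable ℝ g)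
    (hS : ∀ x, S x = 2 * pd (fun y => (swirl g y).2) (0, 1) x) (z : ℝ × ℝ) (hz : z ≠ 0) :
    μ (rad z) * S z = stressProfile μ g (rad z) * -(2 * (z.1 * z.2)) := by
  rw [hS, pd_swirl_snd hz (hg _), stressProfile]
  ring

end Swirl

section Profile

variable {μ g : ℝ → ℝ} {r : ℝ}

lemma differentiableAt_stressProfile (hr : r ≠ 0) (hμ : DifferentiableAt ℝ μ r)
    (hg : DifferentiableAt ℝ (deriv g) r) : DifferentiableAt ℝ (stressProfile μ g) r :=
  (hμ.fun_mul hg).fun_div differentiableAt_id hr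

lemma deriv_cube_mul_eq_stressProfile (hr : r ≠ 0) (hμ : DifferentiableAt ℝ μ r)
    (hg : DifferentiableAt ℝ (deriv g) r) :
    deriv (fun s => s ^ 3 * μ s * deriv g s) r
      = 4 * r ^ 3 * stressProfile μ g r + r ^ 4 * deriv (stressProfile μ g) r := by
  have hEq : (fun s => s ^ 3 * μ s * deriv g s) =ᶠ[nhds r]
      fun s => s ^ 4 * stressProfile μ g s := by
    filter_upwards [eventually_ne_nhds hr] with s hs
    rw [stressProfile]
    field_simp
  have h : HasDerivAt (fun s => s ^ 4 * stressProfile μ g s) _ r :=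
    (hasDerivAt_pow 4 r).mul (differentiableAt_stressProfile hr hμ hg).hasDerivAt
  rw [hEq.deriv_eq, h.deriv]
  norm_num

end Profile

/-- For `u = rg(r)e_θ` with `g ∈ C²` and `μ = μ(r) ∈ C¹` on `ℝ²∖{0}`,
`div(μ Su) = r^{-2} ∂_r(r³ μ ∂_r g) e_θ`, where `Su = ∇u + (∇u)^T`. -/
theorem stmt13 (g : ℝ → ℝ) (hg : ContDiff ℝ 2 g)
    (μ : ℝ → ℝ) (hμ : ContDiff ℝ 1 μ)
    (u : ℝ × ℝ → ℝ × ℝ) (hu : ∀ x : ℝ × ℝ, u x = g (rad x) • ((x.2, -x.1) : ℝ × ℝ))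
    (S₁₁ S₁₂ S₂₂ : ℝ × ℝ → ℝ)
    (hS₁₁ : ∀ x, S₁₁ x = 2 * pd (fun y => (u y).1) (1, 0) x)
    (hS₁₂ : ∀ x, S₁₂ x = pd (fun y => (u y).1) (0, 1) x + pd (fun y => (u y).2) (1, 0) x)
    (hS₂₂ : ∀ x, S₂₂ x = 2 * pd (fun y => (u y).2) (0, 1) x) :
    ∀ x : ℝ × ℝ, x ≠ 0 →
      ((pd (fun z => μ (rad z) * S₁₁ z) (1, 0) x
          + pd (fun z => μ (rad z) * S₁₂ z) (0, 1) x,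
        pd (fun z => μ (rad z) * S₁₂ z) (1, 0) x
          + pd (fun z => μ (rad z) * S₂₂ z) (0, 1) x) : ℝ × ℝ)
        = (((rad x) ^ 2)⁻¹ * deriv (fun s => s ^ 3 * μ s * deriv g s) (rad x)) •
            ((x.2 / rad x, -x.1 / rad x) : ℝ × ℝ) := by
  intro x hx
  obtain rfl : u = swirl g := funext hu
  have hr : rad x ≠ 0 := (rad_pos hx).ne'
  have hg₁ : Differentiable ℝ g := hg.differentiable two_ne_zero
  have hg₂ : Differentiable ℝ (deriv g) := hg.differentiable_deriv_two
  have hμ₁ : Differentiable ℝ μ := hμ.differentiable one_ne_zero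
  have hH := differentiableAt_stressProfile hr (hμ₁ _) (hg₂ _)
  have hfst : HasFDerivAt Prod.fst (fst ℝ ℝ ℝ) x := hasFDerivAt_fst
  have hsnd : HasFDerivAt Prod.snd (snd ℝ ℝ ℝ) x := hasFDerivAt_snd
  have hP₁₁ : HasFDerivAt (fun z : ℝ × ℝ => 2 * (z.1 * z.2)) _ x :=
    (hfst.mul hsnd).const_mul 2
  have hP₁₂ : HasFDerivAt (fun z : ℝ × ℝ => z.2 * z.2 - z.1 * z.1) _ x :=
    (hsnd.mul hsnd).sub (hfst.mul hfst)
  have hP₂₂ : HasFDerivAt (fun z : ℝ × ℝ => -(2 * (z.1 * z.2))) _ x := hP₁₁.neg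
  rw [pd_congr_of_ne_zero (stress₁₁_swirl μ hg₁ hS₁₁) hx,
    pd_congr_of_ne_zero (stress₁₂_swirl μ hg₁ hS₁₂) hx,
    pd_congr_of_ne_zero (stress₁₂_swirl μ hg₁ hS₁₂) hx,
    pd_congr_of_ne_zero (stress₂₂_swirl μ hg₁ hS₂₂) hx,
    pd_radial_mul hx hH hP₁₁, pd_radial_mul hx hH hP₁₂, pd_radial_mul hx hH hP₁₂,
    pd_radial_mul hx hH hP₂₂, deriv_cube_mul_eq_stressProfile hr (hμ₁ _) (hg₂ _)]
  simp only [add_apply, smul_apply, sub_apply, neg_apply, coe_fst', coe_snd', smul_eq_mul,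
    Prod.smul_mk, Prod.mk.injEq]
  constructor <;> field_simp
  · linear_combination (-(deriv (stressProfile μ g) (rad x) * x.2)) * rad_sq x
  · linear_combination (deriv (stressProfile μ g) (rad x) * x.1) * rad_sq x
end

section
/- Let μ(θ) = 2 for θ ∈ [0, π/4) and 1 for θ ∈ [π/4, π/2], define h(θ) = −π/2 − θ for θ ∈ [0,π/4) and h(θ) = −π/4 − 2θ for θ ∈ [π/4, π/2], and set ρ = −4μ/h. Then h is continuous with h < 0 on [0,π/2], μ h' ≡ −2 is constant (so ∂_θ(μ ∂_θ h) = 0 distributionally), and ρ h² + ∂_θ(μ ∂_θ h) + 4μh = 0, i.e. the radial-flow ODE ρh² + ∂_θ(μ∂_θ h) + 4μh = C holds with C = 0. -/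
open Real

/-- The explicit radial-flow example with piecewise-constant viscosity:
`μ = 2` on `[0,π/4)`, `1` on `[π/4,π/2]`, `h` piecewise affine, `ρ = -4μ/h`.
Then `h` is continuous and negative, `μ h' ≡ -2` (so `∂_θ(μ∂_θ h) = 0`
distributionally since `μh'` is constant), and `ρh² + ∂_θ(μ∂_θ h) + 4μh = 0`,
i.e. the radial-flow ODE holds with `C = 0`. -/
theorem stmt18 (μ h ρ hder : ℝ → ℝ)
    (hμ : ∀ θ, μ θ = if θ < π / 4 then 2 else 1)
    (hh : ∀ θ, h θ = if θ < π / 4 then -(π / 2) - θ else -(π / 4) - 2 * θ)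
    (hρ : ∀ θ, ρ θ = -(4 * μ θ) / h θ)
    (hhder : ∀ θ, hder θ = if θ < π / 4 then -1 else -2) :
    ContinuousOn h (Set.Icc 0 (π / 2)) ∧
    (∀ θ ∈ Set.Icc (0 : ℝ) (π / 2), h θ < 0) ∧
    (∀ θ : ℝ, θ ≠ π / 4 → HasDerivAt h (hder θ) θ) ∧
    (∀ θ : ℝ, μ θ * hder θ = -2) ∧
    (∀ ψ : ℝ → ℝ, ContDiff ℝ (⊤ : ℕ∞) ψ → HasCompactSupport ψ →
      ∫ θ : ℝ, μ θ * hder θ * deriv ψ θ = 0) ∧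
    (∀ θ ∈ Set.Icc (0 : ℝ) (π / 2), ρ θ * h θ ^ 2 + 0 + 4 * μ θ * h θ = 0) := by
  have hpi : (0:ℝ) < π := pi_pos
  have hneg : ∀ θ ∈ Set.Icc (0 : ℝ) (π / 2), h θ < 0 := by
    intro θ hθ
    rw [hh θ]
    split_ifs with hlt
    · nlinarith [hθ.1]
    · nlinarith [hθ.1]
  have hcont : Continuous h := by
    have : h = fun θ => if θ ≤ π / 4 then -(π / 2) - θ else -(π / 4) - 2 * θ := by
      funext θ
      rw [hh θ]
      rcases lt_trichotomy θ (π / 4) with h1 | h1 | h1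
      · simp [h1, h1.le]
      · subst h1; norm_num; ring
      · simp [not_lt.2 h1.le, h1.not_ge]
    rw [this]
    apply Continuous.if_le (by continuity) (by continuity) continuous_id continuous_const
    intro x hx; subst hx; ring
  have hmul : ∀ θ : ℝ, μ θ * hder θ = -2 := by
    intro θ; rw [hμ θ, hhder θ]; split_ifs <;> norm_num
  refine ⟨hcont.continuousOn, hneg, ?_, hmul, ?_, ?_⟩
  · intro θ hθ
    rcases lt_or_gt_of_ne hθ with hlt | hgt
    · have he : h =ᶠ[nhds θ] fun x => -(π / 2) - x := by
        filter_upwards [eventually_lt_nhds hlt] with x hx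
        rw [hh x]; simp [hx]
      have : HasDerivAt (fun x : ℝ => -(π / 2) - x) (-1) θ := by
        simpa using (hasDerivAt_id θ).const_sub (-(π / 2))
      rw [hhder θ]; simp only [hlt, if_pos]
      exact this.congr_of_eventuallyEq he
    · have he : h =ᶠ[nhds θ] fun x => -(π / 4) - 2 * x := by
        filter_upwards [eventually_gt_nhds hgt] with x hx
        rw [hh x]; simp [not_lt.2 hx.le]
      have : HasDerivAt (fun x : ℝ => -(π / 4) - 2 * x) (-2) θ := by
        simpa using ((hasDerivAt_id θ).const_mul (2:ℝ)).const_sub (-(π / 4))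
      rw [hhder θ]; simp only [not_lt.2 hgt.le, if_neg, hgt.not_gt]
      exact this.congr_of_eventuallyEq he
  · intro ψ hψ hcs
    have h1 : (∫ θ : ℝ, μ θ * hder θ * deriv ψ θ) = ∫ θ : ℝ, -2 * deriv ψ θ := by
      congr 1; funext θ; rw [hmul θ]
    rw [h1]
    have hψ1 : ContDiff ℝ 1 ψ := hψ.of_le (by simp)
    have hint : MeasureTheory.Integrable (deriv ψ) := by
      exact ((hψ1.continuous_deriv le_rfl).integrable_of_hasCompactSupport hcs.deriv)
    rw [MeasureTheory.integral_const_mul]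
    have : (∫ θ : ℝ, deriv ψ θ) = (∫ θ in Set.Iic 0, deriv ψ θ) + ∫ θ in Set.Ioi 0, deriv ψ θ := by
      exact (intervalIntegral.integral_Iic_add_Ioi hint.integrableOn hint.integrableOn).symm
    rw [this, hcs.integral_Iic_deriv_eq hψ1 0, hcs.integral_Ioi_deriv_eq hψ1 0]
    ring
  · intro θ hθ
    have hne : h θ ≠ 0 := (hneg θ hθ).ne
    rw [hρ θ]
    field_simp
    ring
end
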